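/- For any two distinct points X, Y of the Gromov–Hausdorff space of compact metric spaces (d_GH(X,Y) > 0), there exists a compact metric space Z with d_GH(X,Z) + d_GH(Z,Y) = d_GH(X,Y), d_GH(X,Z) > 0, and d_GH(Z,Y) > 0; i.e., the open metric segment [X,Y] ∖ {X,Y} is nonempty. -/

import Mathlib

/-!
Let `R ⊆ X × Y` be the correspondence of pairs at distance at most `d = d_GH(X, Y)` in an
optimal coupling of `X` and `Y`; its distortion is at most `2d`. Equipped with the average
metric `(d_X + d_Y) / 2`, the compact space `R` is `d/2`-close to both `X` and `Y`, because
both projections are surjective with distortion at most `d`. The triangle inequality then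
forces both distances to equal `d/2`, which is positive when `X ≠ Y`.
-/

open GromovHausdorff Metric Set

theorem Metric.exists_dist_le_of_hausdorffDist_le {Z : Type*} [PseudoMetricSpace Z]
    {s t : Set Z} {x : Z} {r : ℝ} (hx : x ∈ s) (hs : Bornology.IsBounded s) (ht : IsCompact t)
    (ht₀ : t.Nonempty) (H : hausdorffDist s t ≤ r) : ∃ y ∈ t, dist x y ≤ r := by
  obtain ⟨y, hy, hxy⟩ := ht.exists_infDist_eq_dist ht₀ x
  refine ⟨y, hy, hxy ▸ (infDist_le_hausdorffDist_of_mem hx ?_).trans H⟩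
  exact hausdorffEDist_ne_top_of_nonempty_of_bounded ⟨x, hx⟩ ht₀ hs ht.isBounded

theorem GromovHausdorff.ghDist_le_of_surjective {X Y : Type*} [MetricSpace X] [CompactSpace X]
    [Nonempty X] [MetricSpace Y] [CompactSpace Y] [Nonempty Y] {f : X → Y}
    (hf : Function.Surjective f) {ε : ℝ} (H : ∀ x x', |dist x x' - dist (f x) (f x')| ≤ ε) :
    ghDist X Y ≤ ε / 2 := by
  have := ghDist_le_of_approx_subsets (s := univ) (fun x ↦ f x) (ε₁ := 0) (ε₃ := 0)
    (fun x ↦ ⟨x, mem_univ x, by simp⟩)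
    (fun y ↦ ⟨⟨(hf y).choose, mem_univ _⟩, by simp [(hf y).choose_spec]⟩)
    fun x x' ↦ H x x'
  simpa using this

/-- Equipped below with the metric `(d_X + d_Y) / 2`: for an optimal correspondence `R`, the
midpoint of the Gromov–Hausdorff geodesic from `X` to `Y`. -/
@[ext]
structure MidpointSpace {X Y : Type*} (R : Set (X × Y)) where
  fst : X
  snd : Y
  mem : (fst, snd) ∈ R

namespace MidpointSpace

variable {X Y : Type*} {R : Set (X × Y)}

def ofSubtype (p : R) : MidpointSpace R := ⟨p.1.1, p.1.2, p.2⟩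

theorem ofSubtype_surjective : Function.Surjective (ofSubtype (R := R)) :=
  fun p ↦ ⟨⟨(p.fst, p.snd), p.mem⟩, rfl⟩

variable [MetricSpace X] [MetricSpace Y]

noncomputable instance : MetricSpace (MidpointSpace R) where
  dist p q := (dist p.fst q.fst + dist p.snd q.snd) / 2
  dist_self p := by simp
  dist_comm p q := by simp [dist_comm]
  dist_triangle p q r := by
    have := dist_triangle p.fst q.fst r.fst
    have := dist_triangle p.snd q.snd r.snd
    linarith
  eq_of_dist_eq_zero {p q} hpq := by
    have := dist_nonneg (x := p.fst) (y := q.fst)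
    have := dist_nonneg (x := p.snd) (y := q.snd)
    exact MidpointSpace.ext (dist_le_zero.1 (by linarith)) (dist_le_zero.1 (by linarith))

theorem dist_eq (p q : MidpointSpace R) : dist p q = (dist p.fst q.fst + dist p.snd q.snd) / 2 :=
  rfl

theorem lipschitzWith_one_ofSubtype : LipschitzWith 1 (ofSubtype (R := R)) :=
  LipschitzWith.of_dist_le_mul fun p q ↦ by
    have := le_max_left (dist p.1.1 q.1.1) (dist p.1.2 q.1.2)
    have := le_max_right (dist p.1.1 q.1.1) (dist p.1.2 q.1.2)
    rw [NNReal.coe_one, one_mul, Subtype.dist_eq, Prod.dist_eq]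
    change (dist p.1.1 q.1.1 + dist p.1.2 q.1.2) / 2 ≤ _
    linarith

instance [CompactSpace R] : CompactSpace (MidpointSpace R) :=
  isCompact_univ_iff.1 <| by
    simpa [ofSubtype_surjective.range_eq] using
      isCompact_range (lipschitzWith_one_ofSubtype (R := R)).continuous

section GhDist

variable [CompactSpace (MidpointSpace R)] [Nonempty (MidpointSpace R)] {r : ℝ}

theorem ghDist_left_le [CompactSpace X] [Nonempty X]
    (hdis : ∀ p q : MidpointSpace R, |dist p.fst q.fst - dist p.snd q.snd| ≤ 2 * r)
    (hR : ∀ x, ∃ y, (x, y) ∈ R) : ghDist (MidpointSpace R) X ≤ r / 2 := by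
  refine ghDist_le_of_surjective (f := fun p ↦ p.fst)
    (fun x ↦ ⟨⟨x, _, (hR x).choose_spec⟩, rfl⟩) fun p q ↦ ?_
  rw [dist_eq]
  have := abs_le.1 (hdis p q)
  exact abs_le.2 ⟨by linarith, by linarith⟩

theorem ghDist_right_le [CompactSpace Y] [Nonempty Y]
    (hdis : ∀ p q : MidpointSpace R, |dist p.fst q.fst - dist p.snd q.snd| ≤ 2 * r)
    (hR : ∀ y, ∃ x, (x, y) ∈ R) : ghDist (MidpointSpace R) Y ≤ r / 2 := by
  refine ghDist_le_of_surjective (f := fun p ↦ p.snd)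
    (fun y ↦ ⟨⟨_, y, (hR y).choose_spec⟩, rfl⟩) fun p q ↦ ?_
  rw [dist_eq]
  have := abs_le.1 (hdis p q)
  exact abs_le.2 ⟨by linarith, by linarith⟩

end GhDist

end MidpointSpace

theorem Isometry.abs_dist_sub_dist_le {X Y Z : Type*} [PseudoMetricSpace X]
    [PseudoMetricSpace Y] [PseudoMetricSpace Z] {Φ : X → Z} {Ψ : Y → Z} (hΦ : Isometry Φ)
    (hΨ : Isometry Ψ) {x x' : X} {y y' : Y} {r : ℝ} (h : dist (Φ x) (Ψ y) ≤ r)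
    (h' : dist (Φ x') (Ψ y') ≤ r) : |dist x x' - dist y y'| ≤ 2 * r := by
  rw [← hΦ.dist_eq, ← hΨ.dist_eq, abs_le]
  have hX := dist_triangle4 (Φ x) (Ψ y) (Ψ y') (Φ x')
  have hY := dist_triangle4 (Ψ y) (Φ x) (Φ x') (Ψ y')
  rw [dist_comm (Ψ y') (Φ x')] at hX
  rw [dist_comm (Ψ y) (Φ x)] at hY
  constructor <;> linarith

namespace GromovHausdorff

variable (X Y : Type*) [MetricSpace X] [CompactSpace X] [Nonempty X] [MetricSpace Y]
  [CompactSpace Y] [Nonempty Y]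

def optimalCorrespondence : Set (X × Y) :=
  {p | dist (optimalGHInjl X Y p.1) (optimalGHInjr X Y p.2) ≤ ghDist X Y}

theorem isClosed_optimalCorrespondence : IsClosed (optimalCorrespondence X Y) :=
  isClosed_le (((isometry_optimalGHInjl X Y).continuous.comp continuous_fst).dist
    ((isometry_optimalGHInjr X Y).continuous.comp continuous_snd)) continuous_const

variable {X Y}

theorem exists_mem_optimalCorrespondence_left (x : X) :
    ∃ y, (x, y) ∈ optimalCorrespondence X Y := by
  obtain ⟨_, ⟨y, rfl⟩, hy⟩ := exists_dist_le_of_hausdorffDist_le (mem_range_self x)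
    (isCompact_range (isometry_optimalGHInjl X Y).continuous).isBounded
    (isCompact_range (isometry_optimalGHInjr X Y).continuous) (range_nonempty _)
    hausdorffDist_optimal.le
  exact ⟨y, hy⟩

theorem exists_mem_optimalCorrespondence_right (y : Y) :
    ∃ x, (x, y) ∈ optimalCorrespondence X Y := by
  obtain ⟨_, ⟨x, rfl⟩, hx⟩ := exists_dist_le_of_hausdorffDist_le (mem_range_self y)
    (isCompact_range (isometry_optimalGHInjr X Y).continuous).isBounded
    (isCompact_range (isometry_optimalGHInjl X Y).continuous) (range_nonempty _)
    (hausdorffDist_comm.trans_le hausdorffDist_optimal.le)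
  exact ⟨x, (dist_comm _ _).trans_le hx⟩

variable (X Y)

theorem exists_dist_eq_half_dist :
    ∃ p : GHSpace, dist (toGHSpace X) p = dist (toGHSpace X) (toGHSpace Y) / 2 ∧
      dist p (toGHSpace Y) = dist (toGHSpace X) (toGHSpace Y) / 2 := by
  let Z := MidpointSpace (optimalCorrespondence X Y)
  have : CompactSpace (optimalCorrespondence X Y) :=
    isCompact_iff_compactSpace.1 (isClosed_optimalCorrespondence X Y).isCompact
  have : Nonempty Z :=
    ⟨⟨_, _, (exists_mem_optimalCorrespondence_left (Classical.arbitrary X)).choose_spec⟩⟩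
  have hdis (p q : Z) : |dist p.fst q.fst - dist p.snd q.snd| ≤ 2 * ghDist X Y :=
    (isometry_optimalGHInjl X Y).abs_dist_sub_dist_le (isometry_optimalGHInjr X Y) p.mem q.mem
  have hX : dist (toGHSpace X) (toGHSpace Z) ≤ dist (toGHSpace X) (toGHSpace Y) / 2 := by
    rw [dist_comm]
    exact MidpointSpace.ghDist_left_le hdis exists_mem_optimalCorrespondence_left
  have hY : dist (toGHSpace Z) (toGHSpace Y) ≤ dist (toGHSpace X) (toGHSpace Y) / 2 :=
    MidpointSpace.ghDist_right_le hdis exists_mem_optimalCorrespondence_right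
  have htri := dist_triangle (toGHSpace X) (toGHSpace Z) (toGHSpace Y)
  exact ⟨toGHSpace Z, by linarith, by linarith⟩

end GromovHausdorff

/-- For distinct points of the Gromov–Hausdorff space, the open metric segment is nonempty:
there is a compact space `Z` strictly between `X` and `Y`. -/
theorem stmt15 {X Y : Type*} [MetricSpace X] [CompactSpace X] [Nonempty X]
    [MetricSpace Y] [CompactSpace Y] [Nonempty Y]
    (h : 0 < GromovHausdorff.ghDist X Y) :
    ∃ p : GromovHausdorff.GHSpace,
      dist (GromovHausdorff.toGHSpace X) p + dist p (GromovHausdorff.toGHSpace Y) =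
        dist (GromovHausdorff.toGHSpace X) (GromovHausdorff.toGHSpace Y) ∧
      0 < dist (GromovHausdorff.toGHSpace X) p ∧
      0 < dist p (GromovHausdorff.toGHSpace Y) := by
  obtain ⟨p, hXp, hpY⟩ := exists_dist_eq_half_dist X Y
  refine ⟨p, ?_⟩
  rw [hXp, hpY]
  exact ⟨add_halves _, half_pos h, half_pos h⟩
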